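/- arXiv:2210.13083 — 2 statements merged into one kernel-verified Lean document; each statement's English description precedes it below -/
import Mathlib

section
/- Let 𝒜 be a finite nonempty set, φ : 𝒜 → ℝ^d, V a symmetric positive definite real d×d matrix, β ≥ 0, and θ̂, θ* ∈ ℝ^d with ‖θ̂ − θ*‖_V ≤ β. Let â ∈ 𝒜 be a maximizer of a ↦ φ(a)ᵀθ̂. Then max_{a∈𝒜} φ(a)ᵀθ* − φ(â)ᵀθ* ≤ 2·β·max_{a∈𝒜} ‖φ(a)‖_{V⁻¹}. -/
open Matrix

/-- The `V`-weighted norm `‖u‖_V := √(uᵀ V u)`. -/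
noncomputable def matNorm {d : ℕ} (V : Matrix (Fin d) (Fin d) ℝ) (u : Fin d → ℝ) : ℝ :=
  Real.sqrt (u ⬝ᵥ V *ᵥ u)

lemma matNorm_nonneg {d : ℕ} (V : Matrix (Fin d) (Fin d) ℝ) (u : Fin d → ℝ) :
    0 ≤ matNorm V u := Real.sqrt_nonneg _

lemma matNorm_cs {d : ℕ} {M : Matrix (Fin d) (Fin d) ℝ} (hM : M.PosDef)
    (x y : Fin d → ℝ) : x ⬝ᵥ M *ᵥ y ≤ matNorm M x * matNorm M y := by
  have hsymm : ∀ u v : Fin d → ℝ, u ⬝ᵥ M *ᵥ v = v ⬝ᵥ M *ᵥ u := by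
    intro u v
    rw [dotProduct_mulVec, dotProduct_comm, ← mulVec_transpose]
    have : Mᵀ = M := by
      have := hM.isHermitian
      simpa [Matrix.IsHermitian, conjTranspose_eq_transpose_of_trivial] using this
    rw [this]
  have hpsd : ∀ u : Fin d → ℝ, 0 ≤ u ⬝ᵥ M *ᵥ u := by
    intro u
    rcases eq_or_ne u 0 with h | h
    · simp [h]
    · exact (hM.dotProduct_mulVec_pos h).le
  set a := y ⬝ᵥ M *ᵥ y
  set b := x ⬝ᵥ M *ᵥ y
  set c := x ⬝ᵥ M *ᵥ x
  have hq : ∀ t : ℝ, 0 ≤ a * (t * t) + (2 * b) * t + c := by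
    intro t
    have h0 := hpsd (x + t • y)
    have hexp : (x + t • y) ⬝ᵥ M *ᵥ (x + t • y) = a * (t * t) + (2 * b) * t + c := by
      simp only [mulVec_add, mulVec_smul, dotProduct_add, add_dotProduct,
        dotProduct_smul, smul_dotProduct, smul_eq_mul]
      have := hsymm y x
      ring_nf
      rw [show y ⬝ᵥ M *ᵥ x = b from this.trans rfl]
      ring
    linarith [hexp ▸ h0]
  have hd := discrim_le_zero hq
  rw [discrim] at hd
  have hb2 : b ^ 2 ≤ c * a := by nlinarith
  calc b ≤ |b| := le_abs_self b
    _ = Real.sqrt (b ^ 2) := (Real.sqrt_sq_eq_abs b).symm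
    _ ≤ Real.sqrt (c * a) := Real.sqrt_le_sqrt hb2
    _ = matNorm M x * matNorm M y := by
        rw [Real.sqrt_mul (hpsd x)]; rfl

lemma dot_le {d : ℕ} {V : Matrix (Fin d) (Fin d) ℝ} (hV : V.PosDef)
    (v w : Fin d → ℝ) : v ⬝ᵥ w ≤ matNorm V⁻¹ v * matNorm V w := by
  have hinv : V⁻¹ * V = 1 := nonsing_inv_mul V (isUnit_iff_ne_zero.mpr hV.det_pos.ne')
  have h1 : v ⬝ᵥ V⁻¹ *ᵥ (V *ᵥ w) = v ⬝ᵥ w := by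
    rw [mulVec_mulVec, hinv, one_mulVec]
  have h2 : matNorm V⁻¹ (V *ᵥ w) = matNorm V w := by
    unfold matNorm
    rw [mulVec_mulVec, hinv, one_mulVec, dotProduct_comm]
  calc v ⬝ᵥ w = v ⬝ᵥ V⁻¹ *ᵥ (V *ᵥ w) := h1.symm
    _ ≤ matNorm V⁻¹ v * matNorm V⁻¹ (V *ᵥ w) := matNorm_cs hV.inv v _
    _ = matNorm V⁻¹ v * matNorm V w := by rw [h2]

/-- Instantaneous regret of the greedy action: if `‖θ̂ − θ*‖_V ≤ β` and `â` maximizes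
`a ↦ φ(a)ᵀθ̂`, then `max_a φ(a)ᵀθ* − φ(â)ᵀθ* ≤ 2β max_a ‖φ(a)‖_{V⁻¹}`. -/
theorem greedy_regret_bound {A : Type*} [Fintype A] [Nonempty A] {d : ℕ}
    (φ : A → (Fin d → ℝ)) (V : Matrix (Fin d) (Fin d) ℝ) (hV : V.PosDef)
    (β : ℝ) (hβ : 0 ≤ β) (θhat θstar : Fin d → ℝ)
    (hconf : matNorm V (θhat - θstar) ≤ β)
    (ahat : A) (hmax : ∀ a, φ a ⬝ᵥ θhat ≤ φ ahat ⬝ᵥ θhat) :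
    (Finset.univ.sup' Finset.univ_nonempty fun a => φ a ⬝ᵥ θstar) - φ ahat ⬝ᵥ θstar ≤
      2 * β * Finset.univ.sup' Finset.univ_nonempty fun a => matNorm V⁻¹ (φ a) := by
  set S := Finset.univ.sup' Finset.univ_nonempty fun a => matNorm V⁻¹ (φ a) with hS
  have hnormeq : matNorm V (θstar - θhat) = matNorm V (θhat - θstar) := by
    unfold matNorm
    rw [show θstar - θhat = -(θhat - θstar) by abel, mulVec_neg, dotProduct_neg,
      neg_dotProduct, neg_neg]
  rw [sub_le_iff_le_add]
  apply Finset.sup'_le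
  intro a _
  have hSa : matNorm V⁻¹ (φ a) ≤ S := Finset.le_sup' (fun a => matNorm V⁻¹ (φ a)) (Finset.mem_univ a)
  have hSh : matNorm V⁻¹ (φ ahat) ≤ S := Finset.le_sup' (fun a => matNorm V⁻¹ (φ a)) (Finset.mem_univ ahat)
  have h1 : φ a ⬝ᵥ (θstar - θhat) ≤ matNorm V⁻¹ (φ a) * β := by
    calc φ a ⬝ᵥ (θstar - θhat) ≤ matNorm V⁻¹ (φ a) * matNorm V (θstar - θhat) :=
          dot_le hV _ _
      _ ≤ matNorm V⁻¹ (φ a) * β := by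
          rw [hnormeq]; exact mul_le_mul_of_nonneg_left hconf (matNorm_nonneg _ _)
  have h2 : φ ahat ⬝ᵥ (θhat - θstar) ≤ matNorm V⁻¹ (φ ahat) * β := by
    calc φ ahat ⬝ᵥ (θhat - θstar) ≤ matNorm V⁻¹ (φ ahat) * matNorm V (θhat - θstar) :=
          dot_le hV _ _
      _ ≤ matNorm V⁻¹ (φ ahat) * β :=
          mul_le_mul_of_nonneg_left hconf (matNorm_nonneg _ _)
  have hd1 : φ a ⬝ᵥ θstar - φ a ⬝ᵥ θhat ≤ matNorm V⁻¹ (φ a) * β := by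
    rwa [dotProduct_sub] at h1
  have hd2 : φ ahat ⬝ᵥ θhat - φ ahat ⬝ᵥ θstar ≤ matNorm V⁻¹ (φ ahat) * β := by
    rwa [dotProduct_sub] at h2
  have hmaxa := hmax a
  nlinarith [mul_le_mul_of_nonneg_right hSa hβ, mul_le_mul_of_nonneg_right hSh hβ]
end

section
/- (Anytime Freedman inequality.) Let (Ω, F, P) be a probability space with a filtration (F_t)_{t≥0}, and let (Z_t)_{t≥1} be a martingale difference sequence with respect to (F_t), i.e., each Z_t is F_t-measurable and E[Z_t | F_{t−1}] = 0 a.s., and suppose |Z_t| ≤ a almost surely for all t, where a > 0. Then for every δ ∈ (0,1), with probability at least 1 − δ, simultaneously for all integers t ≥ 1: |Σ_{k=1}^t Z_k| ≤ 2·√( (Σ_{k=1}^t Var[Z_k | F_{k−1}])·log(4t/δ) ) + 4·a·log(4t/δ). -/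
set_option maxHeartbeats 1000000

open MeasureTheory Finset



private lemma log4_ge : (1.38 : ℝ) ≤ Real.log 4 := by
  have h2 : Real.log 4 = 2 * Real.log 2 := by
    rw [show (4:ℝ) = 2^2 by norm_num, Real.log_pow]; push_cast; ring
  have := Real.log_two_gt_d9
  rw [h2]; linarith

private lemma log94_pos : (0:ℝ) < Real.log (9/4) := Real.log_pos (by norm_num)

private lemma log94_le_one : Real.log ((9:ℝ)/4) ≤ 1 := by
  have he : (9/4:ℝ) ≤ Real.exp 1 := by
    have := Real.exp_one_gt_d9; linarith
  calc Real.log ((9:ℝ)/4) ≤ Real.log (Real.exp 1) := Real.log_le_log (by norm_num) he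
    _ = 1 := Real.log_exp 1

private lemma key_numeric (A c₁ ℓ : ℝ) (hA : 1.38 ≤ A) (hc₁0 : 0 < c₁) (hc₁1 : c₁ ≤ 1)
    (hℓ : A + c₁ + 1.38 ≤ ℓ) :
    Real.sqrt (11/18) * (Real.sqrt (A*(A+c₁)) + (3/2)*(A+c₁)) ≤ 2*Real.sqrt (ℓ*A) := by
  have hApos : 0 < A := by linarith
  have hBpos : 0 < A + c₁ := by linarith
  have hℓpos : 0 < ℓ := by linarith
  have h1 : Real.sqrt (A*(A+c₁)) ≤ (A+(A+c₁))/2 := by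
    have h : A*(A+c₁) ≤ ((A+(A+c₁))/2)^2 := by nlinarith [sq_nonneg c₁]
    calc Real.sqrt (A*(A+c₁)) ≤ Real.sqrt (((A+(A+c₁))/2)^2) := Real.sqrt_le_sqrt h
      _ = (A+(A+c₁))/2 := Real.sqrt_sq (by linarith)
  have hs18 : (0:ℝ) ≤ Real.sqrt (11/18) := Real.sqrt_nonneg _
  have step : Real.sqrt (11/18) * ((A+(A+c₁))/2 + (3/2)*(A+c₁)) ≤ 2*Real.sqrt (ℓ*A) := by
    have key : Real.sqrt (11/18) * ((5/2)*A + 2*c₁) ≤ Real.sqrt (4*(ℓ*A)) := by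
      apply (Real.le_sqrt (by positivity) (by positivity)).mpr
      have hsq : (Real.sqrt (11/18))^2 = 11/18 := Real.sq_sqrt (by norm_num)
      rw [mul_pow, hsq]
      have h4ℓ : 4*((A+c₁+1.38)*A) ≤ 4*(ℓ*A) := by nlinarith
      nlinarith [mul_nonneg (le_of_lt hc₁0) (sub_nonneg.mpr hc₁1),
        mul_nonneg (sub_nonneg.mpr hA) (le_of_lt hc₁0),
        mul_nonneg (sub_nonneg.mpr hA) (sub_nonneg.mpr hA)]
    have h4 : Real.sqrt (4*(ℓ*A)) = 2*Real.sqrt (ℓ*A) := by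
      rw [show (4:ℝ)*(ℓ*A) = 2^2*(ℓ*A) by ring,
        Real.sqrt_mul (by positivity : (0:ℝ) ≤ (2:ℝ)^2) (ℓ*A),
        Real.sqrt_sq (by norm_num : (0:ℝ) ≤ 2)]
    calc Real.sqrt (11/18) * ((A+(A+c₁))/2 + (3/2)*(A+c₁))
        = Real.sqrt (11/18) * ((5/2)*A + 2*c₁) := by ring
      _ ≤ Real.sqrt (4*(ℓ*A)) := key
      _ = 2*Real.sqrt (ℓ*A) := h4
  calc Real.sqrt (11/18) * (Real.sqrt (A*(A+c₁)) + (3/2)*(A+c₁))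
      ≤ Real.sqrt (11/18) * ((A+(A+c₁))/2 + (3/2)*(A+c₁)) := by
        apply mul_le_mul_of_nonneg_left _ hs18; linarith
    _ ≤ 2*Real.sqrt (ℓ*A) := step

private lemma freedman_det (a δ : ℝ) (ha : 0 < a) (hδ0 : 0 < δ) (hδ1 : δ < 1)
    (t : ℕ) (ht : 1 ≤ t) (S V : ℝ) (hV0 : 0 ≤ V) (hVt : V ≤ (t:ℝ) * a^2)
    (H : ∀ i : ℕ, S ≤ (11/18) * ((2/3)^i / (2*a)) * V
        + Real.log (4 * (9/4)^i / δ) * ((2*a) * (3/2)^i)) :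
    S ≤ 2 * Real.sqrt (V * Real.log (4*t/δ)) + 4*a*Real.log (4*t/δ) := by
  have htR : (1:ℝ) ≤ (t:ℝ) := by exact_mod_cast ht
  set ℓ := Real.log (4*t/δ) with hℓdef
  have hu : ∀ i : ℕ, Real.log (4 * (9/4)^i / δ)
      = Real.log (4/δ) + i * Real.log (9/4) := by
    intro i
    rw [Real.log_div (by positivity) (ne_of_gt hδ0),
      Real.log_mul (by norm_num) (by positivity), Real.log_pow,
      Real.log_div (by norm_num) (ne_of_gt hδ0)]
    ring
  have hu0_pos : 0 < Real.log (4/δ) := Real.log_pos (by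
    rw [lt_div_iff₀ hδ0]; linarith)
  have hu0_ge : Real.log 4 ≤ Real.log (4/δ) := by
    apply Real.log_le_log (by norm_num)
    rw [le_div_iff₀ hδ0]; nlinarith
  have hℓ_split : ℓ = Real.log (4/δ) + Real.log t := by
    rw [hℓdef, show (4:ℝ)*t/δ = (4/δ)*t by ring,
      Real.log_mul (by positivity) (by positivity)]
  have hlogt_nonneg : 0 ≤ Real.log (t:ℝ) := Real.log_nonneg htR
  have hu0ℓ : Real.log (4/δ) ≤ ℓ := by rw [hℓ_split]; linarith
  have hℓpos : 0 < ℓ := lt_of_lt_of_le hu0_pos hu0ℓ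
  have hpow : ∀ i : ℕ, ((2/3:ℝ)^i)^2 = (4/9:ℝ)^i := by
    intro i
    rw [← pow_mul, mul_comm i 2, pow_mul]; norm_num
  -- existence of a grid index where the balance tips
  have hex : ∃ i : ℕ, (11/18) * ((2/3)^i / (2*a))^2 * V ≤ Real.log (4 * (9/4)^i / δ) := by
    obtain ⟨n, hn⟩ := exists_pow_lt_of_lt_one
      (show (0:ℝ) < Real.log (4/δ) / (V/a^2 + 1) by positivity)
      (show (4/9:ℝ) < 1 by norm_num)
    refine ⟨n, ?_⟩
    rw [hu n]
    have hterm : (11/18) * ((2/3)^n / (2*a))^2 * V = (11/72) * ((4/9)^n * (V/a^2)) := by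
      rw [div_pow, hpow n]; field_simp; ring
    have hp : (0:ℝ) < (4/9:ℝ)^n := by positivity
    have hw : (0:ℝ) ≤ V/a^2 := by positivity
    have h1 : (4/9:ℝ)^n * (V/a^2+1) < Real.log (4/δ) := by
      rw [lt_div_iff₀ (by positivity : (0:ℝ) < V/a^2+1)] at hn; nlinarith
    have h2 : (11/72) * ((4/9)^n * (V/a^2)) ≤ (4/9:ℝ)^n * (V/a^2+1) := by nlinarith
    have h3 : (0:ℝ) ≤ (n:ℝ) * Real.log (9/4) :=
      mul_nonneg (Nat.cast_nonneg n) (le_of_lt log94_pos)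
    rw [hterm]; linarith
  set i₀ := Nat.find hex with hi₀
  cases hcase : i₀ with
  | zero =>
    have hQ0 : (11/18) * ((2/3:ℝ)^0 / (2*a))^2 * V ≤ Real.log (4 * (9/4:ℝ)^0 / δ) := by
      have := Nat.find_spec hex; rwa [← hi₀, hcase] at this
    have hQ0' : (11/18) * (1 / (2*a))^2 * V ≤ Real.log (4/δ) := by
      have h := hQ0; rw [hu 0] at h; push_cast at h
      rw [pow_zero] at h; linarith
    have hmul : (11/18) * (1/(2*a)) * V ≤ Real.log (4/δ) * (2*a) := by
      have h := mul_le_mul_of_nonneg_right hQ0' (le_of_lt (show (0:ℝ) < 2*a by linarith))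
      have he : (11/18) * (1/(2*a))^2 * V * (2*a) = (11/18) * (1/(2*a)) * V := by
        field_simp
      rw [he] at h; exact h
    have hH0 := H 0
    rw [hu 0] at hH0
    push_cast at hH0
    simp only [pow_zero, mul_one] at hH0
    have hS : S ≤ 4*a*Real.log (4/δ) := by linarith
    have h2ℓ : 4*a*Real.log (4/δ) ≤ 4*a*ℓ := by
      have := mul_le_mul_of_nonneg_left hu0ℓ (by positivity : (0:ℝ) ≤ 4*a)
      linarith
    linarith [Real.sqrt_nonneg (V*ℓ)]
  | succ m =>
    have hQ1 : (11/18) * ((2/3:ℝ)^(m+1) / (2*a))^2 * V ≤ Real.log (4 * (9/4:ℝ)^(m+1) / δ) := by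
      have := Nat.find_spec hex; rwa [← hi₀, hcase] at this
    have hQm : ¬ ((11/18) * ((2/3:ℝ)^m / (2*a))^2 * V ≤ Real.log (4 * (9/4:ℝ)^m / δ)) := by
      have hlt : m < i₀ := by omega
      exact Nat.find_min hex (by omega)
    push_neg at hQm
    set A := Real.log (4 * (9/4:ℝ)^m / δ) with hAdef
    set B := Real.log (4 * (9/4:ℝ)^(m+1) / δ) with hBdef
    have hA38 : (1.38:ℝ) ≤ A := by
      rw [hAdef, hu m]
      have h3 : (0:ℝ) ≤ (m:ℝ) * Real.log (9/4) :=
        mul_nonneg (Nat.cast_nonneg m) (le_of_lt log94_pos)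
      linarith [log4_ge]
    have hApos : (0:ℝ) < A := by linarith
    have hBA : B = A + Real.log (9/4) := by
      rw [hAdef, hBdef, hu m, hu (m+1)]; push_cast; ring
    have hBpos : (0:ℝ) < B := by linarith [log94_pos]
    set Lm : ℝ := (2/3:ℝ)^m / (2*a) with hLmdef
    set L1 : ℝ := (2/3:ℝ)^(m+1) / (2*a) with hL1def
    have hLmpos : 0 < Lm := by rw [hLmdef]; positivity
    have hL1pos : 0 < L1 := by rw [hL1def]; positivity
    set b := Real.sqrt ((11/18)*V) with hbdef
    have hb2 : b^2 = (11/18)*V := Real.sq_sqrt (by positivity)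
    have hbnn : 0 ≤ b := Real.sqrt_nonneg _
    -- V > 0 in this case
    have hVpos : 0 < V := by
      by_contra hV
      push_neg at hV
      have hV0' : V = 0 := le_antisymm hV hV0
      rw [hV0'] at hQm
      simp at hQm
      linarith
    have hbpos : 0 < b := Real.sqrt_pos.mpr (by positivity)
    -- from ¬Q m : sqrt A ≤ Lm * b
    have hQm' : A < (Lm*b)^2 := by
      have : (Lm*b)^2 = (11/18)*Lm^2*V := by rw [mul_pow, hb2]; ring
      rw [this]; exact hQm
    have hsqrtA : Real.sqrt A ≤ Lm * b := by
      calc Real.sqrt A ≤ Real.sqrt ((Lm*b)^2) := Real.sqrt_le_sqrt (le_of_lt hQm')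
        _ = Lm*b := Real.sqrt_sq (by positivity)
    have hsA_pos : 0 < Real.sqrt A := Real.sqrt_pos.mpr hApos
    -- from Q (m+1) : L1 * b ≤ sqrt B
    have hL1b : L1 * b ≤ Real.sqrt B := by
      apply (Real.le_sqrt (by positivity) (le_of_lt hBpos)).mpr
      have : (L1*b)^2 = (11/18)*L1^2*V := by rw [mul_pow, hb2]; ring
      rw [this]; exact hQ1
    -- inverse of Lm
    have hLmInv : Lm * ((2*a)*(3/2)^m) = 1 := by
      have h23 : ((2/3:ℝ)^m) * ((3/2:ℝ)^m) = 1 := by rw [← mul_pow]; norm_num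
      have hane : (2*a:ℝ) ≠ 0 := by positivity
      rw [hLmdef]
      calc (2/3:ℝ)^m/(2*a) * ((2*a)*(3/2)^m)
          = ((2/3:ℝ)^m * (3/2)^m) * ((2*a)/(2*a)) := by ring
        _ = 1 := by rw [h23, div_self hane]; ring
    have hinv_le : (2*a)*(3/2)^m * Real.sqrt A ≤ b := by
      have h := mul_le_mul_of_nonneg_left hsqrtA
        (le_of_lt (show (0:ℝ) < (2*a)*(3/2)^m by positivity))
      calc (2*a)*(3/2)^m * Real.sqrt A ≤ (2*a)*(3/2)^m * (Lm*b) := h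
        _ = (Lm * ((2*a)*(3/2)^m)) * b := by ring
        _ = b := by rw [hLmInv]; ring
    -- main hypothesis at index m+1
    have hH := H (m+1)
    rw [← hL1def, ← hBdef] at hH
    -- term 1 : (11/18) * L1 * V ≤ sqrt B * b
    have hterm1 : (11/18) * L1 * V ≤ Real.sqrt B * b := by
      have h : (11/18)*L1*V = L1*b^2 := by rw [hb2]; ring
      rw [h]
      calc L1*b^2 = (L1*b)*b := by ring
        _ ≤ Real.sqrt B * b := mul_le_mul_of_nonneg_right hL1b hbnn
    -- term 2 : B * ((2a)*(3/2)^(m+1)) * sqrt A ≤ (3/2) * B * b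
    have hterm2 : B * ((2*a)*(3/2)^(m+1)) * Real.sqrt A ≤ (3/2) * B * b := by
      have h32 : ((2:ℝ)*a)*(3/2)^(m+1) = (3/2)*((2*a)*(3/2)^m) := by
        rw [pow_succ]; ring
      rw [h32]
      calc B * ((3/2)*((2*a)*(3/2)^m)) * Real.sqrt A
          = (3/2)*B*((2*a)*(3/2)^m * Real.sqrt A) := by ring
        _ ≤ (3/2)*B*b := by
            apply mul_le_mul_of_nonneg_left hinv_le (by positivity)
    -- bound on ℓ : B + log 4 ≤ ℓ
    have hLm2 : Lm^2 = (4/9:ℝ)^m/(4*a^2) := by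
      rw [hLmdef, div_pow, hpow m]
      congr 1; ring
    have h94m : (9/4:ℝ)^m * (4/9:ℝ)^m = 1 := by
      rw [← mul_pow]; norm_num
    have h5 : (9/4:ℝ)^m * A ≤ (11/72)*((t:ℝ)) := by
      have h6 := mul_le_mul_of_nonneg_left (le_of_lt hQm)
        (show (0:ℝ) ≤ (9/4:ℝ)^m by positivity)
      have h7 : (9/4:ℝ)^m * ((11/18) * Lm^2 * V) = (11/72)*(V/a^2) := by
        rw [hLm2]
        field_simp
        nlinarith [h94m]
      have h8 : V/a^2 ≤ (t:ℝ) := by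
        rw [div_le_iff₀ (by positivity)]; linarith
      calc (9/4:ℝ)^m * A ≤ (9/4:ℝ)^m * ((11/18) * Lm^2 * V) := h6
        _ = (11/72)*(V/a^2) := h7
        _ ≤ (11/72)*(t:ℝ) := by linarith
    have h94pos : (0:ℝ) < (9/4:ℝ)^(m+1) := by positivity
    have h8 : (9/4:ℝ)^(m+1) ≤ (t:ℝ)/4 := by
      have h7 : (9/4:ℝ)^(m+1) * A ≤ (11/32)*(t:ℝ) := by
        rw [pow_succ]
        calc (9/4:ℝ)^m * (9/4) * A = ((9/4:ℝ)^m * A) * (9/4) := by ring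
          _ ≤ (11/72)*(t:ℝ) * (9/4) := by nlinarith
          _ = (11/32)*(t:ℝ) := by ring
      nlinarith [mul_le_mul_of_nonneg_left hA38 (le_of_lt h94pos)]
    have hℓB : B + Real.log 4 ≤ ℓ := by
      have hlog8 : Real.log ((9/4:ℝ)^(m+1)) ≤ Real.log ((t:ℝ)/4) :=
        Real.log_le_log h94pos h8
      have hrt : Real.log ((t:ℝ)/4) = Real.log (t:ℝ) - Real.log 4 :=
        Real.log_div (by positivity) (by norm_num)
      rw [Real.log_pow, hrt] at hlog8
      rw [hBdef, hu (m+1), hℓ_split]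
      push_cast at hlog8 ⊢
      linarith
    -- apply the key numeric inequality
    have hkey := key_numeric A (Real.log (9/4)) ℓ hA38 log94_pos log94_le_one
      (by linarith [log4_ge])
    rw [← hBA] at hkey
    -- combine
    have hmulA : S * Real.sqrt A ≤ 2 * Real.sqrt V * Real.sqrt ℓ * Real.sqrt A := by
      have hstep1 : S * Real.sqrt A ≤ Real.sqrt B * b * Real.sqrt A + (3/2)*B*b := by
        have := mul_le_mul_of_nonneg_right hH (le_of_lt hsA_pos)
        calc S * Real.sqrt A
            ≤ ((11/18) * L1 * V + B * ((2*a) * (3/2)^(m+1))) * Real.sqrt A := this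
          _ = (11/18)*L1*V*Real.sqrt A + B*((2*a)*(3/2)^(m+1))*Real.sqrt A := by ring
          _ ≤ Real.sqrt B * b * Real.sqrt A + (3/2)*B*b := by
              have h1 := mul_le_mul_of_nonneg_right hterm1 (le_of_lt hsA_pos)
              linarith
      have hbsplit : b = Real.sqrt (11/18) * Real.sqrt V := by
        rw [hbdef, Real.sqrt_mul (by norm_num)]
      have hABs : Real.sqrt A * Real.sqrt B = Real.sqrt (A*B) := (Real.sqrt_mul (le_of_lt hApos) B).symm
      have hℓAs : Real.sqrt ℓ * Real.sqrt A = Real.sqrt (ℓ*A) := (Real.sqrt_mul (le_of_lt hℓpos) A).symm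
      have hstep2 : Real.sqrt B * b * Real.sqrt A + (3/2)*B*b
          = Real.sqrt V * (Real.sqrt (11/18) * (Real.sqrt (A*B) + (3/2)*B)) := by
        rw [hbsplit, ← hABs]; ring
      have hstep3 : Real.sqrt V * (Real.sqrt (11/18) * (Real.sqrt (A*B) + (3/2)*B))
          ≤ Real.sqrt V * (2*Real.sqrt (ℓ*A)) :=
        mul_le_mul_of_nonneg_left hkey (Real.sqrt_nonneg V)
      calc S * Real.sqrt A ≤ Real.sqrt B * b * Real.sqrt A + (3/2)*B*b := hstep1
        _ = Real.sqrt V * (Real.sqrt (11/18) * (Real.sqrt (A*B) + (3/2)*B)) := hstep2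
        _ ≤ Real.sqrt V * (2*Real.sqrt (ℓ*A)) := hstep3
        _ = 2 * Real.sqrt V * Real.sqrt ℓ * Real.sqrt A := by rw [← hℓAs]; ring
    have hS2 : S ≤ 2 * Real.sqrt V * Real.sqrt ℓ :=
      le_of_mul_le_mul_right hmulA hsA_pos
    have hVℓ : Real.sqrt V * Real.sqrt ℓ = Real.sqrt (V*ℓ) := (Real.sqrt_mul hV0 ℓ).symm
    have h4aℓ : 0 ≤ 4*a*ℓ := by positivity
    calc S ≤ 2 * Real.sqrt V * Real.sqrt ℓ := hS2
      _ = 2 * Real.sqrt (V*ℓ) := by rw [← hVℓ]; ring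
      _ ≤ 2 * Real.sqrt (V*ℓ) + 4*a*ℓ := by linarith



private lemma exp_quad {x : ℝ} (hx : |x| ≤ 1/2) : Real.exp x ≤ 1 + x + (11/18)*x^2 := by
  have h1 : |x| ≤ 1 := by linarith [abs_nonneg x]
  have h := Real.exp_bound h1 (by norm_num : (0:ℕ) < 3)
  have hsum : ∑ m ∈ Finset.range 3, x^m/(Nat.factorial m : ℝ) = 1 + x + x^2/2 := by
    simp [Finset.sum_range_succ, Nat.factorial]
  rw [hsum] at h
  norm_num [Nat.factorial] at h
  have h2 := (abs_le.mp h).2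
  have h3 : |x|^3 ≤ (1/2) * x^2 := by
    have e : |x|^3 = x^2 * |x| := by
      rw [show (3:ℕ) = 2+1 from rfl, pow_succ, sq_abs]
    rw [e]
    calc x^2 * |x| ≤ x^2 * (1/2) := mul_le_mul_of_nonneg_left hx (sq_nonneg x)
      _ = (1/2) * x^2 := by ring
  nlinarith [h2, h3]

private lemma ville {Ω : Type*} {m0 : MeasurableSpace Ω} {P : Measure Ω}
    [IsProbabilityMeasure P] {F : Filtration ℕ m0} {M : ℕ → Ω → ℝ}
    (hM : Supermartingale M F P) (hpos : ∀ t ω, 0 ≤ M t ω)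
    (h0 : ∫ ω, M 0 ω ∂P = 1) (u : ℝ) :
    P {ω | ∃ t, Real.exp u < M t ω} ≤ ENNReal.ofReal (Real.exp (-u)) := by
  have hunion : {ω | ∃ t, Real.exp u < M t ω}
      = ⋃ n : ℕ, {ω | ∃ t, t ≤ n ∧ Real.exp u < M t ω} := by
    ext ω
    simp only [Set.mem_setOf_eq, Set.mem_iUnion]
    constructor
    · rintro ⟨t, ht⟩; exact ⟨t, t, le_rfl, ht⟩
    · rintro ⟨n, t, _, ht⟩; exact ⟨t, ht⟩
  rw [hunion]
  have hdir : Directed (· ⊆ ·) (fun n => {ω | ∃ t, t ≤ n ∧ Real.exp u < M t ω}) := by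
    apply Monotone.directed_le
    intro n m hnm ω hω
    obtain ⟨t, htn, h⟩ := hω
    exact ⟨t, le_trans htn hnm, h⟩
  rw [hdir.measure_iUnion]
  apply iSup_le
  intro n
  have hτst : IsStoppingTime F (fun ω => ((hittingBtwn M (Set.Ici (Real.exp u)) 0 n ω : ℕ) : WithTop ℕ)) :=
    hM.stronglyAdapted.adapted.isStoppingTime_hittingBtwn measurableSet_Ici
  set τ : Ω → WithTop ℕ := fun ω => ((hittingBtwn M (Set.Ici (Real.exp u)) 0 n ω : ℕ) : WithTop ℕ) with hτdef
  have hτle : ∀ ω, τ ω ≤ n := fun ω => WithTop.coe_le_coe.mpr (hittingBtwn_le ω)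
  have hsv_int : Integrable (stoppedValue M τ) P :=
    integrable_stoppedValue ℕ hτst hM.integrable hτle
  have hos := (hM.neg).expected_stoppedValue_mono (isStoppingTime_const F 0) hτst
    (fun ω => WithTop.coe_le_coe.mpr (Nat.zero_le _)) hτle
  have he0 : stoppedValue (-M) (fun _ => WithTop.some (0:ℕ)) = fun ω => -(M 0 ω) := rfl
  have heτ : stoppedValue (-M) τ = fun ω => -(stoppedValue M τ ω) := rfl
  rw [he0, heτ, integral_neg, integral_neg] at hos
  have hsv_le1 : ∫ ω, stoppedValue M τ ω ∂P ≤ 1 := by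
    rw [← h0]; linarith [hos]
  have hmarkov := mul_meas_ge_le_integral_of_nonneg
    (Filter.Eventually.of_forall (fun ω => hpos (τ ω).untopA ω)) hsv_int (Real.exp u)
  have hsub : {ω | ∃ t, t ≤ n ∧ Real.exp u < M t ω}
      ⊆ {x | Real.exp u ≤ stoppedValue M τ x} := by
    rintro ω ⟨t, htn, hlt⟩
    have hmem : ∃ j ∈ Set.Icc 0 n, M j ω ∈ Set.Ici (Real.exp u) :=
      ⟨t, ⟨Nat.zero_le t, htn⟩, le_of_lt hlt⟩
    exact stoppedValue_hittingBtwn_mem hmem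
  calc P {ω | ∃ t, t ≤ n ∧ Real.exp u < M t ω}
      ≤ P {x | Real.exp u ≤ stoppedValue M τ x} := measure_mono hsub
    _ ≤ ENNReal.ofReal (Real.exp (-u)) := by
        have hne : P {x | Real.exp u ≤ stoppedValue M τ x} ≠ ⊤ := measure_ne_top _ _
        have hpos' := Real.exp_pos u
        have h1 : Real.exp u * (P {x | Real.exp u ≤ stoppedValue M τ x}).toReal ≤ 1 :=
          le_trans hmarkov hsv_le1
        have htoReal : (P {x | Real.exp u ≤ stoppedValue M τ x}).toReal ≤ Real.exp (-u) := by
          have h2 : (P {x | Real.exp u ≤ stoppedValue M τ x}).toReal ≤ 1 / Real.exp u := by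
            rw [le_div_iff₀ hpos']
            nlinarith [h1]
          rw [Real.exp_neg]
          rw [inv_eq_one_div]
          exact h2
        calc P {x | Real.exp u ≤ stoppedValue M τ x}
            = ENNReal.ofReal ((P {x | Real.exp u ≤ stoppedValue M τ x}).toReal) :=
              (ENNReal.ofReal_toReal hne).symm
          _ ≤ ENNReal.ofReal (Real.exp (-u)) := ENNReal.ofReal_le_ofReal htoReal

private lemma lam_inv {a : ℝ} (ha : 0 < a) (i : ℕ) :
    ((2/3:ℝ)^i/(2*a)) * ((2*a)*(3/2)^i) = 1 := by
  have h23 : ((2/3:ℝ)^i) * ((3/2:ℝ)^i) = 1 := by rw [← mul_pow]; norm_num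
  have hane : (2*a:ℝ) ≠ 0 := by positivity
  calc ((2/3:ℝ)^i/(2*a)) * ((2*a)*(3/2)^i)
      = ((2/3:ℝ)^i * (3/2)^i) * ((2*a)/(2*a)) := by ring
    _ = 1 := by rw [h23, div_self hane]; ring

private lemma event_to_H {a S V u : ℝ} (ha : 0 < a) (i : ℕ)
    (h : ((2/3:ℝ)^i/(2*a)) * S - (11/18)*((2/3:ℝ)^i/(2*a))^2 * V ≤ u) :
    S ≤ (11/18) * ((2/3:ℝ)^i/(2*a)) * V + u * ((2*a)*(3/2)^i) := by
  have hDpos : (0:ℝ) < (2*a)*(3/2)^i := by positivity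
  have hinv : ((2/3:ℝ)^i/(2*a)) * ((2*a)*(3/2)^i) = 1 := lam_inv ha i
  have h2 := mul_le_mul_of_nonneg_right h (le_of_lt hDpos)
  have e : (((2/3:ℝ)^i/(2*a))*S - (11/18)*((2/3:ℝ)^i/(2*a))^2*V)*((2*a)*(3/2)^i)
      = S - (11/18)*((2/3:ℝ)^i/(2*a))*V := by
    have e2 : (((2/3:ℝ)^i/(2*a))*S - (11/18)*((2/3:ℝ)^i/(2*a))^2*V)*((2*a)*(3/2)^i)
        = (((2/3:ℝ)^i/(2*a)) * ((2*a)*(3/2)^i))*S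
          - (11/18)*((2/3:ℝ)^i/(2*a))*(((2/3:ℝ)^i/(2*a)) * ((2*a)*(3/2)^i))*V := by ring
    rw [e2, hinv]; ring
  rw [e] at h2
  linarith

private noncomputable def expM {Ω : Type*} (Z v : ℕ → Ω → ℝ) (lam : ℝ) : ℕ → Ω → ℝ :=
  fun t ω => Real.exp (lam * (∑ k ∈ Finset.Icc 1 t, Z k ω)
    - (11/18)*lam^2 * (∑ k ∈ Finset.Icc 1 t, v k ω))

private lemma freedman_ville {Ω : Type*} {m0 : MeasurableSpace Ω} (P : Measure Ω)
    [IsProbabilityMeasure P] (F : Filtration ℕ m0) (Z v : ℕ → Ω → ℝ)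
    (a lam : ℝ) (ha : 0 < a) (hlam : |lam| * a ≤ 1/2)
    (hadapt : ∀ k, 1 ≤ k → Measurable[F k] (Z k))
    (hbdd : ∀ k, ∀ᵐ ω ∂P, |Z k ω| ≤ a)
    (hvSM : ∀ k, StronglyMeasurable[F (k-1)] (v k))
    (hv_nonneg : ∀ k, 1 ≤ k → 0 ≤ᵐ[P] v k)
    (hmgf : ∀ k, 1 ≤ k → P[fun ω => Real.exp (lam * Z k ω)|F (k-1)]
      ≤ᵐ[P] fun ω => Real.exp ((11/18)*lam^2 * v k ω))
    (hexpint : ∀ k, 1 ≤ k → Integrable (fun ω => Real.exp (lam * Z k ω)) P)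
    (u : ℝ) :
    P {ω | ∃ t, Real.exp u < expM Z v lam t ω} ≤ ENNReal.ofReal (Real.exp (-u)) := by
  have hm0 : ∀ k, 1 ≤ k → Measurable (Z k) := fun k hk => (hadapt k hk).mono (F.le k) le_rfl
  -- measurability of partial sums w.r.t. F t
  have hSm : ∀ t, Measurable[F t] (fun ω => ∑ k ∈ Finset.Icc 1 t, Z k ω) := by
    intro t
    apply Finset.measurable_sum
    intro k hk
    obtain ⟨hk1, hkt⟩ := Finset.mem_Icc.mp hk
    exact (hadapt k hk1).mono (F.mono hkt) le_rfl
  have hVm : ∀ t, Measurable[F t] (fun ω => ∑ k ∈ Finset.Icc 1 t, v k ω) := by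
    intro t
    apply Finset.measurable_sum
    intro k hk
    obtain ⟨hk1, hkt⟩ := Finset.mem_Icc.mp hk
    exact ((hvSM k).measurable).mono (F.mono (le_trans (Nat.sub_le k 1) hkt)) le_rfl
  have hMadp : StronglyAdapted F (expM Z v lam) := by
    intro t
    apply Measurable.stronglyMeasurable
    exact Real.measurable_exp.comp (((hSm t).const_mul lam).sub ((hVm t).const_mul _))
  -- a.e. bound on M t
  have hae_sum : ∀ t, ∀ᵐ ω ∂P, |∑ k ∈ Finset.Icc 1 t, Z k ω| ≤ (t:ℝ)*a := by
    intro t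
    have hall : ∀ᵐ ω ∂P, ∀ k : ℕ, |Z k ω| ≤ a := ae_all_iff.mpr hbdd
    filter_upwards [hall] with ω hω
    calc |∑ k ∈ Finset.Icc 1 t, Z k ω| ≤ ∑ k ∈ Finset.Icc 1 t, |Z k ω| :=
          Finset.abs_sum_le_sum_abs _ _
      _ ≤ ∑ _k ∈ Finset.Icc 1 t, a := Finset.sum_le_sum fun k _ => hω k
      _ = (t:ℝ)*a := by
          rw [Finset.sum_const, Nat.card_Icc, nsmul_eq_mul]
          norm_num
  have hae_v : ∀ t, ∀ᵐ ω ∂P, 0 ≤ ∑ k ∈ Finset.Icc 1 t, v k ω := by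
    intro t
    have hall : ∀ᵐ ω ∂P, ∀ k : ℕ, 1 ≤ k → 0 ≤ v k ω := by
      rw [ae_all_iff]
      intro k
      rcases Nat.eq_zero_or_pos k with hk | hk
      · filter_upwards with ω h; omega
      · filter_upwards [hv_nonneg k hk] with ω h _; exact h
    filter_upwards [hall] with ω hω
    exact Finset.sum_nonneg fun k hk => hω k (Finset.mem_Icc.mp hk).1
  have hMint : ∀ t, Integrable (expM Z v lam t) P := by
    intro t
    refine (integrable_const (Real.exp (|lam| * ((t:ℝ)*a)))).mono' ?_ ?_
    · exact (Real.measurable_exp.comp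
        ((((hSm t).mono (F.le t) le_rfl).const_mul lam).sub
          (((hVm t).mono (F.le t) le_rfl).const_mul _))).aestronglyMeasurable
    · filter_upwards [hae_sum t, hae_v t] with ω h1 h2
      rw [Real.norm_eq_abs, expM, Real.abs_exp]
      apply Real.exp_le_exp.mpr
      have hc : (0:ℝ) ≤ (11/18)*lam^2 := by positivity
      have h3 : lam * (∑ k ∈ Finset.Icc 1 t, Z k ω) ≤ |lam| * ((t:ℝ)*a) := by
        calc lam * (∑ k ∈ Finset.Icc 1 t, Z k ω)
            ≤ |lam * (∑ k ∈ Finset.Icc 1 t, Z k ω)| := le_abs_self _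
          _ = |lam| * |∑ k ∈ Finset.Icc 1 t, Z k ω| := abs_mul _ _
          _ ≤ |lam| * ((t:ℝ)*a) := mul_le_mul_of_nonneg_left h1 (abs_nonneg lam)
      nlinarith [mul_nonneg hc h2]
  -- supermartingale property
  have hstep : ∀ t, P[expM Z v lam (t+1)|F t] ≤ᵐ[P] expM Z v lam t := by
    intro t
    have hk1 : 1 ≤ t+1 := Nat.succ_le_succ (Nat.zero_le t)
    have hsplit : expM Z v lam (t+1)
        = (fun ω => expM Z v lam t ω * Real.exp (-((11/18)*lam^2) * v (t+1) ω))
          * (fun ω => Real.exp (lam * Z (t+1) ω)) := by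
      funext ω
      simp only [Pi.mul_apply, expM]
      rw [Finset.sum_Icc_succ_top hk1, Finset.sum_Icc_succ_top hk1, ← Real.exp_add,
        ← Real.exp_add]
      congr 1
      ring
    have hfSM : StronglyMeasurable[F t]
        (fun ω => expM Z v lam t ω * Real.exp (-((11/18)*lam^2) * v (t+1) ω)) := by
      apply Measurable.stronglyMeasurable
      have h1 : Measurable[F t] (expM Z v lam t) :=
        Real.measurable_exp.comp (((hSm t).const_mul lam).sub ((hVm t).const_mul _))
      have h2 : Measurable[F t] (v (t+1)) := (hvSM (t+1)).measurable
      exact h1.mul (Real.measurable_exp.comp (h2.const_mul _))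
    have hprod_int : Integrable ((fun ω => expM Z v lam t ω
        * Real.exp (-((11/18)*lam^2) * v (t+1) ω))
        * (fun ω => Real.exp (lam * Z (t+1) ω))) P := by
      rw [← hsplit]; exact hMint (t+1)
    have hpull := condExp_mul_of_stronglyMeasurable_left hfSM hprod_int (hexpint (t+1) hk1)
    have hmg := hmgf (t+1) hk1
    rw [hsplit]
    calc P[(fun ω => expM Z v lam t ω * Real.exp (-((11/18)*lam^2) * v (t+1) ω))
          * (fun ω => Real.exp (lam * Z (t+1) ω))|F t]
        =ᵐ[P] (fun ω => expM Z v lam t ω * Real.exp (-((11/18)*lam^2) * v (t+1) ω))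
          * P[fun ω => Real.exp (lam * Z (t+1) ω)|F t] := hpull
      _ ≤ᵐ[P] expM Z v lam t := by
          filter_upwards [hmg] with ω h2
          simp only [Pi.mul_apply]
          have hfnn : 0 ≤ expM Z v lam t ω * Real.exp (-((11/18)*lam^2) * v (t+1) ω) := by
            apply mul_nonneg
            · exact le_of_lt (Real.exp_pos _)
            · exact le_of_lt (Real.exp_pos _)
          calc expM Z v lam t ω * Real.exp (-((11/18)*lam^2) * v (t+1) ω)
                * (P[fun ω => Real.exp (lam * Z (t+1) ω)|F t]) ω
              ≤ expM Z v lam t ω * Real.exp (-((11/18)*lam^2) * v (t+1) ω)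
                * Real.exp ((11/18)*lam^2 * v (t+1) ω) := by
                exact mul_le_mul_of_nonneg_left h2 hfnn
            _ = expM Z v lam t ω := by
                rw [mul_assoc, ← Real.exp_add]
                norm_num
  have hsuper : Supermartingale (expM Z v lam) F P := supermartingale_nat hMadp hMint hstep
  have hpos : ∀ t ω, 0 ≤ expM Z v lam t ω := fun t ω => le_of_lt (Real.exp_pos _)
  have hM0 : ∫ ω, expM Z v lam 0 ω ∂P = 1 := by
    have h1 : expM Z v lam 0 = fun _ => 1 := by
      funext ω
      rw [expM, Finset.Icc_eq_empty (by omega : ¬ (1:ℕ) ≤ 0)]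
      simp
    rw [h1]
    simp
  exact ville hsuper hpos hM0 u

private lemma freedman_mgf {Ω : Type*} {m0 : MeasurableSpace Ω} (P : Measure Ω)
    [IsProbabilityMeasure P] (F : Filtration ℕ m0) (Z : ℕ → Ω → ℝ)
    (a lam : ℝ) (ha : 0 < a) (hlam : |lam| * a ≤ 1/2)
    (hadapt : ∀ k, 1 ≤ k → Measurable[F k] (Z k))
    (hmds : ∀ k, 1 ≤ k → P[Z k|F (k - 1)] =ᵐ[P] 0)
    (hbdd : ∀ k, ∀ᵐ ω ∂P, |Z k ω| ≤ a)
    (k : ℕ) (hk : 1 ≤ k) :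
    P[fun ω => Real.exp (lam * Z k ω)|F (k-1)] ≤ᵐ[P] fun ω => Real.exp ((11/18)*lam^2
      * (P[fun ω' => (Z k ω' - (P[Z k|F (k - 1)]) ω') ^ 2|F (k - 1)]) ω) := by
  have hm0 : Measurable (Z k) := (hadapt k hk).mono (F.le k) le_rfl
  have hZint : Integrable (Z k) P := by
    refine (integrable_const a).mono' hm0.aestronglyMeasurable ?_
    filter_upwards [hbdd k] with ω h using by rwa [Real.norm_eq_abs]
  have hZsqint : Integrable (fun ω => (Z k ω)^2) P := by
    refine (integrable_const (a^2)).mono' (hm0.pow_const 2).aestronglyMeasurable ?_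
    filter_upwards [hbdd k] with ω h
    rw [Real.norm_eq_abs, abs_pow]
    exact pow_le_pow_left₀ (abs_nonneg _) h 2
  have hveq : (P[fun ω' => (Z k ω' - (P[Z k|F (k - 1)]) ω') ^ 2|F (k - 1)])
      =ᵐ[P] P[fun ω' => (Z k ω')^2|F (k - 1)] := by
    apply condExp_congr_ae
    filter_upwards [hmds k hk] with ω h
    simp [h]
  have hexpInt : Integrable (fun ω => Real.exp (lam * Z k ω)) P := by
    refine (integrable_const (Real.exp (1/2))).mono' ?_ ?_
    · exact (Real.measurable_exp.comp (hm0.const_mul lam)).aestronglyMeasurable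
    · filter_upwards [hbdd k] with ω h
      rw [Real.norm_eq_abs, Real.abs_exp]
      apply Real.exp_le_exp.mpr
      calc lam * Z k ω ≤ |lam * Z k ω| := le_abs_self _
        _ = |lam| * |Z k ω| := abs_mul _ _
        _ ≤ |lam| * a := mul_le_mul_of_nonneg_left h (abs_nonneg lam)
        _ ≤ 1/2 := hlam
  have hrfl : (fun ω => 1 + lam * Z k ω + (11/18)*lam^2*(Z k ω)^2)
      = ((fun _ => (1:ℝ)) + lam • Z k) + ((11/18)*lam^2) • (fun ω => (Z k ω)^2) := by
    funext ω
    simp only [Pi.add_apply, Pi.smul_apply, smul_eq_mul]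
  have hquadInt : Integrable (fun ω => 1 + lam * Z k ω + (11/18)*lam^2*(Z k ω)^2) P := by
    rw [hrfl]
    exact ((integrable_const 1).add (hZint.smul lam)).add (hZsqint.smul ((11/18)*lam^2))
  have hptwise : (fun ω => Real.exp (lam * Z k ω)) ≤ᵐ[P]
      (fun ω => 1 + lam * Z k ω + (11/18)*lam^2*(Z k ω)^2) := by
    filter_upwards [hbdd k] with ω h
    have hx : |lam * Z k ω| ≤ 1/2 := by
      rw [abs_mul]
      calc |lam| * |Z k ω| ≤ |lam| * a := mul_le_mul_of_nonneg_left h (abs_nonneg lam)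
        _ ≤ 1/2 := hlam
    calc Real.exp (lam * Z k ω) ≤ 1 + lam * Z k ω + (11/18)*(lam * Z k ω)^2 := exp_quad hx
      _ = 1 + lam * Z k ω + (11/18)*lam^2*(Z k ω)^2 := by ring
  have h1 := condExp_mono (m := F (k-1)) hexpInt hquadInt hptwise
  have hA := condExp_add (m := F (k-1)) (μ := P)
    ((integrable_const (1:ℝ)).add (hZint.smul lam)) (hZsqint.smul ((11/18)*lam^2))
  have hB := condExp_add (m := F (k-1)) (μ := P) (integrable_const (1:ℝ)) (hZint.smul lam)
  have hC := condExp_smul (m := F (k-1)) (μ := P) lam (Z k)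
  have hD := condExp_smul (m := F (k-1)) (μ := P) ((11/18)*lam^2) (fun ω => (Z k ω)^2)
  have hE := condExp_const (μ := P) (F.le (k-1)) (1:ℝ)
  refine h1.trans ?_
  rw [hrfl]
  filter_upwards [hA, hB, hC, hD, hmds k hk, hveq] with ω eA eB eC eD eM eV
  simp only [Pi.add_apply] at eA eB
  simp only [Pi.smul_apply, smul_eq_mul] at eC eD
  have eE := congrFun hE ω
  have eM' : (P[Z k|F (k-1)]) ω = 0 := by simpa using eM
  rw [eA, eB, eC, eD, eE, eM', ← eV]
  have := Real.add_one_le_exp ((11/18)*lam^2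
    * (P[fun ω' => (Z k ω' - (P[Z k|F (k - 1)]) ω') ^ 2|F (k - 1)]) ω)
  linarith

private lemma exp_int {Ω : Type*} {m0 : MeasurableSpace Ω} (P : Measure Ω)
    [IsProbabilityMeasure P] {Z : Ω → ℝ} {a lam : ℝ}
    (hm : Measurable Z) (hb : ∀ᵐ ω ∂P, |Z ω| ≤ a) (hlam : |lam| * a ≤ 1/2) :
    Integrable (fun ω => Real.exp (lam * Z ω)) P := by
  refine (integrable_const (Real.exp (1/2))).mono' ?_ ?_
  · exact (Real.measurable_exp.comp (hm.const_mul lam)).aestronglyMeasurable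
  · filter_upwards [hb] with ω h
    rw [Real.norm_eq_abs, Real.abs_exp]
    apply Real.exp_le_exp.mpr
    calc lam * Z ω ≤ |lam * Z ω| := le_abs_self _
      _ = |lam| * |Z ω| := abs_mul _ _
      _ ≤ |lam| * a := mul_le_mul_of_nonneg_left h (abs_nonneg lam)
      _ ≤ 1/2 := hlam

private noncomputable def cvar {Ω : Type*} {m0 : MeasurableSpace Ω} (P : Measure Ω)
    (F : Filtration ℕ m0) (Z : ℕ → Ω → ℝ) : ℕ → Ω → ℝ :=
  fun k => P[fun ω' => (Z k ω' - (P[Z k|F (k - 1)]) ω') ^ 2|F (k - 1)]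


/-- Anytime Freedman inequality: for a martingale difference sequence `(Z_t)` bounded by `a`,
with probability at least `1 − δ`, simultaneously for all `t ≥ 1`,
`|∑_{k≤t} Z_k| ≤ 2 √((∑_{k≤t} Var[Z_k | F_{k−1}]) log(4t/δ)) + 4a log(4t/δ)`. -/
theorem freedman_anytime
    {Ω : Type*} {m0 : MeasurableSpace Ω} (P : Measure Ω) [IsProbabilityMeasure P]
    (F : Filtration ℕ m0) (Z : ℕ → Ω → ℝ)
    (hadapt : ∀ t, 1 ≤ t → Measurable[F t] (Z t))
    (hmds : ∀ t, 1 ≤ t → P[Z t|F (t - 1)] =ᵐ[P] 0)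
    (a : ℝ) (ha : 0 < a) (hbdd : ∀ t, ∀ᵐ ω ∂P, |Z t ω| ≤ a)
    (δ : ℝ) (hδ : δ ∈ Set.Ioo (0 : ℝ) 1) :
    ENNReal.ofReal (1 - δ) ≤
      P {ω | ∀ t : ℕ, 1 ≤ t →
        |∑ k ∈ Finset.Icc 1 t, Z k ω| ≤
          2 * Real.sqrt ((∑ k ∈ Finset.Icc 1 t,
              (P[fun ω' => (Z k ω' - (P[Z k|F (k - 1)]) ω') ^ 2|F (k - 1)]) ω)
            * Real.log (4 * t / δ)) + 4 * a * Real.log (4 * t / δ)} := by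

  obtain ⟨hδ0, hδ1⟩ := hδ
  classical
  have hm0 : ∀ k, 1 ≤ k → Measurable (Z k) := fun k hk => (hadapt k hk).mono (F.le k) le_rfl
  have hv_nonneg : ∀ k : ℕ, (0:Ω→ℝ) ≤ᵐ[P] cvar P F Z k :=
    fun k => condExp_nonneg (Filter.Eventually.of_forall fun ω => sq_nonneg _)
  have hv_le : ∀ k, 1 ≤ k → cvar P F Z k ≤ᵐ[P] fun _ => a^2 := by
    intro k hk
    have hZsqint : Integrable (fun ω => (Z k ω)^2) P := by
      refine (integrable_const (a^2)).mono' ((hm0 k hk).pow_const 2).aestronglyMeasurable ?_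
      filter_upwards [hbdd k] with ω h
      rw [Real.norm_eq_abs, abs_pow]
      exact pow_le_pow_left₀ (abs_nonneg _) h 2
    have hveq : cvar P F Z k =ᵐ[P] P[fun ω' => (Z k ω')^2|F (k - 1)] := by
      apply condExp_congr_ae
      filter_upwards [hmds k hk] with ω h
      simp [h]
    have hmono := condExp_mono (m := F (k-1)) hZsqint (integrable_const (a^2))
      (by filter_upwards [hbdd k] with ω h
          rw [← sq_abs]
          exact pow_le_pow_left₀ (abs_nonneg _) h 2)
    have hconst := condExp_const (μ := P) (F.le (k-1)) (a^2)
    filter_upwards [hveq, hmono] with ω e1 e2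
    rw [e1]
    calc (P[fun ω' => (Z k ω')^2|F (k-1)]) ω ≤ (P[fun _ => a^2|F (k-1)]) ω := e2
      _ = a^2 := by rw [hconst]
  have hGlobal : ∀ᵐ ω ∂P, (∀ k, |Z k ω| ≤ a) ∧
      (∀ k, 1 ≤ k → 0 ≤ cvar P F Z k ω ∧ cvar P F Z k ω ≤ a^2) := by
    have h1 : ∀ᵐ ω ∂P, ∀ k : ℕ, |Z k ω| ≤ a := ae_all_iff.mpr hbdd
    have h2 : ∀ᵐ ω ∂P, ∀ k : ℕ, 1 ≤ k → 0 ≤ cvar P F Z k ω ∧ cvar P F Z k ω ≤ a^2 := by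
      rw [ae_all_iff]
      intro k
      rcases Nat.eq_zero_or_pos k with h | h
      · filter_upwards with ω hk1; omega
      · filter_upwards [hv_nonneg k, hv_le k h] with ω e1 e2 _; exact ⟨e1, e2⟩
    exact h1.and h2
  have hlam_abs : ∀ i : ℕ, |(2/3:ℝ)^i/(2*a)| * a ≤ 1/2 := by
    intro i
    have h1 : (0:ℝ) ≤ (2/3:ℝ)^i/(2*a) := by positivity
    rw [abs_of_nonneg h1]
    have h2 : (2/3:ℝ)^i ≤ 1 := pow_le_one₀ (by norm_num) (by norm_num)
    have h3 : (2/3:ℝ)^i/(2*a) * a = (2/3:ℝ)^i/2 := by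
      field_simp
    rw [h3]
    linarith
  have hlam_absN : ∀ i : ℕ, |-((2/3:ℝ)^i/(2*a))| * a ≤ 1/2 := by
    intro i; rw [abs_neg]; exact hlam_abs i
  -- the bad events
  have hexp_to : ∀ i : ℕ, Real.exp (-(Real.log (4*(9/4:ℝ)^i/δ))) = δ/4 * (4/9:ℝ)^i := by
    intro i
    have hxpos : (0:ℝ) < 4*(9/4:ℝ)^i/δ := by positivity
    rw [Real.exp_neg, Real.exp_log hxpos]
    have h94 : ((9/4:ℝ)^i)⁻¹ = (4/9:ℝ)^i := by
      rw [← inv_pow]; norm_num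
    rw [inv_div, div_mul_eq_div_div, div_eq_mul_inv (δ/4), h94]
  have hPBadP : ∀ i : ℕ, P {ω | ∃ t, Real.exp (Real.log (4*(9/4:ℝ)^i/δ))
      < expM Z (cvar P F Z) ((2/3:ℝ)^i/(2*a)) t ω} ≤ ENNReal.ofReal (δ/4 * (4/9:ℝ)^i) := by
    intro i
    have hv1 := freedman_ville P F Z (cvar P F Z) a ((2/3:ℝ)^i/(2*a)) ha (hlam_abs i)
      hadapt hbdd (fun k => stronglyMeasurable_condExp) (fun k _ => hv_nonneg k)
      (fun k hk => freedman_mgf P F Z a ((2/3:ℝ)^i/(2*a)) ha (hlam_abs i) hadapt hmds hbdd k hk)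
      (fun k hk => exp_int P (hm0 k hk) (hbdd k) (hlam_abs i))
      (Real.log (4*(9/4:ℝ)^i/δ))
    rw [hexp_to i] at hv1
    exact hv1
  have hPBadN : ∀ i : ℕ, P {ω | ∃ t, Real.exp (Real.log (4*(9/4:ℝ)^i/δ))
      < expM Z (cvar P F Z) (-((2/3:ℝ)^i/(2*a))) t ω} ≤ ENNReal.ofReal (δ/4 * (4/9:ℝ)^i) := by
    intro i
    have hv1 := freedman_ville P F Z (cvar P F Z) a (-((2/3:ℝ)^i/(2*a))) ha (hlam_absN i)
      hadapt hbdd (fun k => stronglyMeasurable_condExp) (fun k _ => hv_nonneg k)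
      (fun k hk => freedman_mgf P F Z a (-((2/3:ℝ)^i/(2*a))) ha (hlam_absN i) hadapt hmds hbdd k hk)
      (fun k hk => exp_int P (hm0 k hk) (hbdd k) (hlam_absN i))
      (Real.log (4*(9/4:ℝ)^i/δ))
    rw [hexp_to i] at hv1
    exact hv1
  -- measurability
  have hone : ∀ (lam u : ℝ), MeasurableSet {ω | ∃ t, Real.exp u < expM Z (cvar P F Z) lam t ω} := by
    intro lam u
    simp only [expM]
    rw [Set.setOf_exists]
    apply MeasurableSet.iUnion
    intro t
    apply measurableSet_lt measurable_const
    apply Measurable.comp Real.measurable_exp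
    apply Measurable.sub
    · apply Measurable.const_mul
      apply Finset.measurable_sum
      intro k hk
      exact hm0 k (Finset.mem_Icc.mp hk).1
    · apply Measurable.const_mul
      apply Finset.measurable_sum
      intro k hk
      exact (stronglyMeasurable_condExp).measurable.mono (F.le _) le_rfl
  have hBmeas : MeasurableSet ((⋃ i : ℕ, {ω | ∃ t, Real.exp (Real.log (4*(9/4:ℝ)^i/δ))
        < expM Z (cvar P F Z) ((2/3:ℝ)^i/(2*a)) t ω})
      ∪ (⋃ i : ℕ, {ω | ∃ t, Real.exp (Real.log (4*(9/4:ℝ)^i/δ))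
        < expM Z (cvar P F Z) (-((2/3:ℝ)^i/(2*a))) t ω})) :=
    (MeasurableSet.iUnion (fun i => hone _ _)).union (MeasurableSet.iUnion (fun i => hone _ _))
  have hgeom : ∀ (Bs : ℕ → Set Ω), (∀ i, P (Bs i) ≤ ENNReal.ofReal (δ/4*(4/9:ℝ)^i)) →
      P (⋃ i, Bs i) ≤ ENNReal.ofReal (9*δ/20) := by
    intro Bs hBs
    have hsummable : Summable (fun i : ℕ => δ/4*(4/9:ℝ)^i) :=
      (summable_geometric_of_lt_one (by norm_num) (by norm_num)).mul_left _
    calc P (⋃ i, Bs i) ≤ ∑' i, P (Bs i) := measure_iUnion_le _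
      _ ≤ ∑' i, ENNReal.ofReal (δ/4*(4/9:ℝ)^i) := ENNReal.tsum_le_tsum hBs
      _ = ENNReal.ofReal (∑' i, δ/4*(4/9:ℝ)^i) :=
          (ENNReal.ofReal_tsum_of_nonneg (fun i => by positivity) hsummable).symm
      _ = ENNReal.ofReal (9*δ/20) := by
          congr 1
          rw [tsum_mul_left, tsum_geometric_of_lt_one (by norm_num) (by norm_num)]
          norm_num
          ring
  have hPBad : P ((⋃ i : ℕ, {ω | ∃ t, Real.exp (Real.log (4*(9/4:ℝ)^i/δ))
        < expM Z (cvar P F Z) ((2/3:ℝ)^i/(2*a)) t ω})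
      ∪ (⋃ i : ℕ, {ω | ∃ t, Real.exp (Real.log (4*(9/4:ℝ)^i/δ))
        < expM Z (cvar P F Z) (-((2/3:ℝ)^i/(2*a))) t ω})) ≤ ENNReal.ofReal (9*δ/10) := by
    calc P _ ≤ P (⋃ i : ℕ, {ω | ∃ t, Real.exp (Real.log (4*(9/4:ℝ)^i/δ))
          < expM Z (cvar P F Z) ((2/3:ℝ)^i/(2*a)) t ω})
        + P (⋃ i : ℕ, {ω | ∃ t, Real.exp (Real.log (4*(9/4:ℝ)^i/δ))
          < expM Z (cvar P F Z) (-((2/3:ℝ)^i/(2*a))) t ω}) := measure_union_le _ _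
      _ ≤ ENNReal.ofReal (9*δ/20) + ENNReal.ofReal (9*δ/20) :=
          add_le_add (hgeom _ hPBadP) (hgeom _ hPBadN)
      _ = ENNReal.ofReal (9*δ/10) := by
          rw [← ENNReal.ofReal_add (by positivity) (by positivity)]
          congr 1
          ring
  -- pointwise inclusion
  have hincl : ∀ ω, ω ∉ ((⋃ i : ℕ, {ω | ∃ t, Real.exp (Real.log (4*(9/4:ℝ)^i/δ))
        < expM Z (cvar P F Z) ((2/3:ℝ)^i/(2*a)) t ω})
      ∪ (⋃ i : ℕ, {ω | ∃ t, Real.exp (Real.log (4*(9/4:ℝ)^i/δ))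
        < expM Z (cvar P F Z) (-((2/3:ℝ)^i/(2*a))) t ω})) →
      ((∀ k, |Z k ω| ≤ a) ∧ (∀ k, 1 ≤ k → 0 ≤ cvar P F Z k ω ∧ cvar P F Z k ω ≤ a^2)) →
      ∀ t : ℕ, 1 ≤ t → |∑ k ∈ Finset.Icc 1 t, Z k ω| ≤
        2*Real.sqrt ((∑ k ∈ Finset.Icc 1 t, cvar P F Z k ω) * Real.log (4*t/δ))
          + 4*a*Real.log (4*t/δ) := by
    intro ω hB hreg t ht
    simp only [Set.mem_union, Set.mem_iUnion, Set.mem_setOf_eq, not_or, not_exists, not_lt] at hB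
    obtain ⟨hBp, hBn⟩ := hB
    have hV0 : 0 ≤ ∑ k ∈ Finset.Icc 1 t, cvar P F Z k ω :=
      Finset.sum_nonneg fun k hk => (hreg.2 k (Finset.mem_Icc.mp hk).1).1
    have hVt : (∑ k ∈ Finset.Icc 1 t, cvar P F Z k ω) ≤ (t:ℝ)*a^2 := by
      calc (∑ k ∈ Finset.Icc 1 t, cvar P F Z k ω) ≤ ∑ _k ∈ Finset.Icc 1 t, a^2 :=
            Finset.sum_le_sum fun k hk => (hreg.2 k (Finset.mem_Icc.mp hk).1).2
        _ = (t:ℝ)*a^2 := by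
            rw [Finset.sum_const, Nat.card_Icc, nsmul_eq_mul]
            norm_num
    have hHp : ∀ i : ℕ, (∑ k ∈ Finset.Icc 1 t, Z k ω) ≤
        (11/18)*((2/3)^i/(2*a))*(∑ k ∈ Finset.Icc 1 t, cvar P F Z k ω)
          + Real.log (4*(9/4)^i/δ)*((2*a)*(3/2)^i) := by
      intro i
      apply event_to_H ha i
      have h := hBp i t
      simp only [expM] at h
      exact Real.exp_le_exp.mp h
    have hHn : ∀ i : ℕ, (-(∑ k ∈ Finset.Icc 1 t, Z k ω)) ≤
        (11/18)*((2/3)^i/(2*a))*(∑ k ∈ Finset.Icc 1 t, cvar P F Z k ω)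
          + Real.log (4*(9/4)^i/δ)*((2*a)*(3/2)^i) := by
      intro i
      apply event_to_H ha i
      have h := hBn i t
      simp only [expM] at h
      have h2 := Real.exp_le_exp.mp h
      have e : (-((2/3:ℝ)^i/(2*a)))*(∑ k ∈ Finset.Icc 1 t, Z k ω)
            - (11/18)*(-((2/3:ℝ)^i/(2*a)))^2*(∑ k ∈ Finset.Icc 1 t, cvar P F Z k ω)
          = ((2/3:ℝ)^i/(2*a))*(-(∑ k ∈ Finset.Icc 1 t, Z k ω))
            - (11/18)*((2/3:ℝ)^i/(2*a))^2*(∑ k ∈ Finset.Icc 1 t, cvar P F Z k ω) := by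
        ring
      rw [e] at h2
      exact h2
    have hdet1 := freedman_det a δ ha hδ0 hδ1 t ht _ _ hV0 hVt hHp
    have hdet2 := freedman_det a δ ha hδ0 hδ1 t ht _ _ hV0 hVt hHn
    rw [abs_le]
    exact ⟨by linarith, hdet1⟩
  have hGlobal' : ((((⋃ i : ℕ, {ω | ∃ t, Real.exp (Real.log (4*(9/4:ℝ)^i/δ))
        < expM Z (cvar P F Z) ((2/3:ℝ)^i/(2*a)) t ω})
      ∪ (⋃ i : ℕ, {ω | ∃ t, Real.exp (Real.log (4*(9/4:ℝ)^i/δ))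
        < expM Z (cvar P F Z) (-((2/3:ℝ)^i/(2*a))) t ω}))ᶜ : Set Ω)) ≤ᵐ[P]
      {ω | ∀ t : ℕ, 1 ≤ t →
        |∑ k ∈ Finset.Icc 1 t, Z k ω| ≤
          2 * Real.sqrt ((∑ k ∈ Finset.Icc 1 t,
              (P[fun ω' => (Z k ω' - (P[Z k|F (k - 1)]) ω') ^ 2|F (k - 1)]) ω)
            * Real.log (4 * t / δ)) + 4 * a * Real.log (4 * t / δ)} := by
    filter_upwards [hGlobal] with ω hreg
    intro hB
    exact hincl ω hB hreg
  calc ENNReal.ofReal (1-δ) ≤ ENNReal.ofReal (1 - 9*δ/10) :=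
        ENNReal.ofReal_le_ofReal (by linarith)
    _ = 1 - ENNReal.ofReal (9*δ/10) := by
        rw [ENNReal.ofReal_sub 1 (by positivity), ENNReal.ofReal_one]
    _ ≤ 1 - P ((⋃ i : ℕ, {ω | ∃ t, Real.exp (Real.log (4*(9/4:ℝ)^i/δ))
          < expM Z (cvar P F Z) ((2/3:ℝ)^i/(2*a)) t ω})
        ∪ (⋃ i : ℕ, {ω | ∃ t, Real.exp (Real.log (4*(9/4:ℝ)^i/δ))
          < expM Z (cvar P F Z) (-((2/3:ℝ)^i/(2*a))) t ω})) := tsub_le_tsub_left hPBad 1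
    _ = P (((⋃ i : ℕ, {ω | ∃ t, Real.exp (Real.log (4*(9/4:ℝ)^i/δ))
          < expM Z (cvar P F Z) ((2/3:ℝ)^i/(2*a)) t ω})
        ∪ (⋃ i : ℕ, {ω | ∃ t, Real.exp (Real.log (4*(9/4:ℝ)^i/δ))
          < expM Z (cvar P F Z) (-((2/3:ℝ)^i/(2*a))) t ω}))ᶜ) :=
        (prob_compl_eq_one_sub hBmeas).symm
    _ ≤ _ := measure_mono_ae hGlobal'
end
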